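/- arXiv:2105.00958 — 2 statements merged into one kernel-verified Lean document; each statement's English description precedes it below -/
import Mathlib

section
/- Uniform resolvent-type lower bound near the gap (quantitative form of Proposition 3.4): Let ω > 0 and R, v_D ∈ ℝ with R v_D ≠ 0 and R² v_D² < 2ω², and set T_per = 2π/ω. Then there exist d₀ > 0, g > 0 and c > 0 such that for every ξ ∈ ℝ² with ‖ξ‖ ≤ d₀, every fundamental solution U of i U′(T) = D̂(T; ξ) U(T), every y ∈ ℝ with |y| ≤ g, and every vector w ∈ ℂ², one has ‖U(T_per) w − e^{iy} w‖ ≥ c ‖w‖. -/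
open Matrix Complex

noncomputable section

/-- The Fourier-side effective Dirac Hamiltonian with circularly polarized forcing:
`D̂(T; ξ) = v_D · [[0, ξ₁ + iξ₂ + R e^{iωT}], [ξ₁ − iξ₂ + R e^{−iωT}, 0]]`. -/
def Dhat (ω R vD : ℝ) (ξ₁ ξ₂ : ℝ) (T : ℝ) : Matrix (Fin 2) (Fin 2) ℂ :=
  (vD : ℂ) •
    !![0, (ξ₁ : ℂ) + Complex.I * ξ₂ + (R : ℂ) * Complex.exp (Complex.I * ω * T);
       (ξ₁ : ℂ) - Complex.I * ξ₂ + (R : ℂ) * Complex.exp (-(Complex.I * ω * T)), 0]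

/-- `U : ℝ → M₂(ℂ)` is a fundamental solution of `i U′(T) = D(T) U(T)`:
`U(0) = I` and (entrywise) `U′(T) = −i D(T) U(T)` for every `T`. -/
def IsFundamentalSolution (D U : ℝ → Matrix (Fin 2) (Fin 2) ℂ) : Prop :=
  U 0 = 1 ∧
  ∀ T : ℝ, ∀ i j : Fin 2,
    HasDerivAt (fun t : ℝ => U t i j) (((-Complex.I) • (D T * U T)) i j) T

/-!
At `ξ = 0` the equation is solved explicitly in the frame rotating with the drive: conjugation by
`P(T) = diag(e^{iωT/2}, e^{-iωT/2})` turns `D̂(T; 0)` into the constant matrix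
`K = (ω/2)σ_z + R v_D σ_x`, and `K² = Ω²` with `Ω² = ω²/4 + R²v_D²`. Hence
`W(T) = P(T) (cos ΩT − i sin ΩT · K/Ω)`, and since `P(T_per) = −1`, the matrix `W(T_per) − 1` is
`2 |cos (πΩ/ω)|` times a unitary. The hypotheses put `πΩ/ω` strictly between `π/2` and `3π/2`,
so this gap `ρ` is positive.

For `ξ ≠ 0`, `D̂(T; ξ) − D̂(T; 0)` is a constant matrix of norm `|v_D| |ξ|`, and Duhamel's formula
for `W(T)* U(T)`, with both propagators unitary, gives `‖U(T_per) − W(T_per)‖ ≤ |v_D| |ξ| T_per`.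
A phase `e^{iy}` moves `w` by at most `|y| ‖w‖`, so for small `|ξ|` and `|y|` half of the gap
survives.
-/

open scoped Real

variable {m n l : Type*}

def HasEntrywiseDerivAt (A : ℝ → Matrix m n ℂ) (A' : Matrix m n ℂ) (t : ℝ) : Prop :=
  ∀ i j, HasDerivAt (fun s => A s i j) (A' i j) t

namespace HasEntrywiseDerivAt

variable {A B : ℝ → Matrix m n ℂ} {A' B' : Matrix m n ℂ} {t : ℝ}

theorem sub (hA : HasEntrywiseDerivAt A A' t) (hB : HasEntrywiseDerivAt B B' t) :
    HasEntrywiseDerivAt (fun s => A s - B s) (A' - B') t :=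
  fun i j => (hA i j).sub (hB i j)

theorem conjTranspose (h : HasEntrywiseDerivAt A A' t) :
    HasEntrywiseDerivAt (fun s => (A s)ᴴ) A'ᴴ t :=
  fun i j => (h j i).star

theorem mul [Fintype n] {C : ℝ → Matrix n l ℂ} {C' : Matrix n l ℂ}
    (hA : HasEntrywiseDerivAt A A' t) (hC : HasEntrywiseDerivAt C C' t) :
    HasEntrywiseDerivAt (fun s => A s * C s) (A' * C t + A t * C') t := by
  intro i j
  simpa only [mul_apply, Matrix.add_apply, ← Finset.sum_add_distrib] using
    HasDerivAt.fun_sum fun k _ => (hA i k).fun_mul (hC k j)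

theorem hasDerivAt_toEuclideanCLM_apply [Fintype n] [DecidableEq n] {A : ℝ → Matrix n n ℂ}
    {A' : Matrix n n ℂ} (h : HasEntrywiseDerivAt A A' t) (w : EuclideanSpace ℂ n) :
    HasDerivAt (fun s => toEuclideanCLM (𝕜 := ℂ) (A s) w) (toEuclideanCLM (𝕜 := ℂ) A' w) t := by
  have hv : HasDerivAt (fun s => A s *ᵥ WithLp.ofLp w) (A' *ᵥ WithLp.ofLp w) t :=
    hasDerivAt_pi.2 fun i => by
      simpa only [mulVec, dotProduct] using HasDerivAt.fun_sum fun j _ => (h i j).mul_const (w j)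
  exact (PiLp.hasFDerivAt_toLp (𝕜 := ℝ) 2 _).comp_hasDerivAt t hv

end HasEntrywiseDerivAt

theorem hasEntrywiseDerivAt_smul_const {f : ℝ → ℂ} {f' : ℂ} {t : ℝ} (hf : HasDerivAt f f' t)
    (A : Matrix m n ℂ) : HasEntrywiseDerivAt (fun s => f s • A) (f' • A) t :=
  fun i j => by simpa only [Matrix.smul_apply, smul_eq_mul] using hf.mul_const (A i j)

theorem hasEntrywiseDerivAt_diagonal [DecidableEq n] {d : ℝ → n → ℂ} {d' : n → ℂ} {t : ℝ}
    (hd : ∀ k, HasDerivAt (fun s => d s k) (d' k) t) :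
    HasEntrywiseDerivAt (fun s => diagonal (d s)) (diagonal d') t := by
  intro i j
  by_cases hij : i = j
  · subst hij
    simpa only [diagonal_apply_eq] using hd i
  · simpa only [diagonal_apply_ne _ hij] using hasDerivAt_const t (0 : ℂ)

theorem eq_of_forall_hasEntrywiseDerivAt_zero {A : ℝ → Matrix m n ℂ}
    (h : ∀ t, HasEntrywiseDerivAt A 0 t) (s t : ℝ) : A s = A t := by
  ext i j
  exact is_const_of_deriv_eq_zero (fun r => (h r i j).differentiableAt)
    (fun r => (h r i j).deriv) s t

theorem norm_toEuclideanCLM_apply_of_conjTranspose_mul_self [Fintype n] [DecidableEq n]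
    {A : Matrix n n ℂ} {ρ : ℝ} (hρ : 0 ≤ ρ) (hA : Aᴴ * A = ((ρ ^ 2 : ℝ) : ℂ) • 1)
    (x : EuclideanSpace ℂ n) : ‖toEuclideanCLM (𝕜 := ℂ) A x‖ = ρ * ‖x‖ := by
  have hsq : ‖toEuclideanCLM (𝕜 := ℂ) A x‖ ^ 2 = (ρ * ‖x‖) ^ 2 := by
    rw [@norm_sq_eq_re_inner ℂ, ← ContinuousLinearMap.adjoint_inner_right,
      ← ContinuousLinearMap.star_eq_adjoint, ← map_star, ← mul_apply_eq_comp, ← map_mul,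
      star_eq_conjTranspose, hA, map_smul, map_one, _root_.smul_apply,
      one_apply_eq_self, inner_smul_right, RCLike.re_to_complex, Complex.re_ofReal_mul,
      ← RCLike.re_to_complex, ← norm_sq_eq_re_inner, mul_pow]
  exact (sq_eq_sq₀ (norm_nonneg _) (by positivity)).1 hsq

theorem norm_toEuclideanCLM_apply_of_mem_unitaryGroup [Fintype n] [DecidableEq n]
    {A : Matrix n n ℂ} (hA : A ∈ unitaryGroup n ℂ) (x : EuclideanSpace ℂ n) :
    ‖toEuclideanCLM (𝕜 := ℂ) A x‖ = ‖x‖ := by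
  have hA' : Aᴴ * A = ((1 ^ 2 : ℝ) : ℂ) • 1 := by
    rw [one_pow, Complex.ofReal_one, one_smul]
    exact mem_unitaryGroup_iff'.1 hA
  rw [norm_toEuclideanCLM_apply_of_conjTranspose_mul_self zero_le_one hA', one_mul]

theorem norm_exp_I_mul_smul_sub_le {E : Type*} [NormedAddCommGroup E] [NormedSpace ℂ E]
    (y : ℝ) (w : E) : ‖exp (I * y) • w - w‖ ≤ |y| * ‖w‖ := by
  rw [show exp (I * y) • w - w = (exp (I * y) - 1) • w by rw [sub_smul, one_smul], norm_smul]
  exact mul_le_mul_of_nonneg_right Real.norm_exp_I_mul_ofReal_sub_one_le (norm_nonneg w)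

namespace IsFundamentalSolution

variable {D D₀ U W : ℝ → Matrix (Fin 2) (Fin 2) ℂ}

theorem hasEntrywiseDerivAt_conjTranspose_mul (hW : IsFundamentalSolution D₀ W)
    (hU : IsFundamentalSolution D U) {t : ℝ} (hD₀ : (D₀ t).IsHermitian) :
    HasEntrywiseDerivAt (fun s => (W s)ᴴ * U s) (-I • ((W t)ᴴ * (D t - D₀ t) * U t)) t := by
  convert (HasEntrywiseDerivAt.conjTranspose (hW.2 t)).mul (hU.2 t) using 1
  simp only [conjTranspose_smul, conjTranspose_mul, hD₀.eq, star_neg, Complex.star_def,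
    Complex.conj_I, Matrix.mul_sub, Matrix.sub_mul, Matrix.mul_smul, Matrix.smul_mul,
    Matrix.mul_assoc]
  module

theorem mem_unitaryGroup (hU : IsFundamentalSolution D U) (hD : ∀ t, (D t).IsHermitian)
    (t : ℝ) : U t ∈ unitaryGroup (Fin 2) ℂ := by
  have hconst (s : ℝ) : HasEntrywiseDerivAt (fun s => (U s)ᴴ * U s) 0 s := by
    simpa using hU.hasEntrywiseDerivAt_conjTranspose_mul hU (hD s)
  rw [mem_unitaryGroup_iff', star_eq_conjTranspose,
    eq_of_forall_hasEntrywiseDerivAt_zero hconst t 0, hU.1, conjTranspose_one, one_mul]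

theorem norm_apply_sub_apply_le (hW : IsFundamentalSolution D₀ W)
    (hU : IsFundamentalSolution D U) (hD₀ : ∀ t, (D₀ t).IsHermitian)
    (hD : ∀ t, (D t).IsHermitian) {κ : ℝ}
    (hκ : ∀ t x, ‖toEuclideanCLM (𝕜 := ℂ) (D t - D₀ t) x‖ ≤ κ * ‖x‖) {T : ℝ} (hT : 0 ≤ T)
    (w : EuclideanSpace ℂ (Fin 2)) :
    ‖toEuclideanCLM (𝕜 := ℂ) (U T) w - toEuclideanCLM (𝕜 := ℂ) (W T) w‖ ≤ κ * ‖w‖ * T := by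
  have hWu := hW.mem_unitaryGroup hD₀
  have hUu := hU.mem_unitaryGroup hD
  set u : ℝ → EuclideanSpace ℂ (Fin 2) := fun s => toEuclideanCLM (𝕜 := ℂ) ((W s)ᴴ * U s) w
  have hderiv (s : ℝ) := HasEntrywiseDerivAt.hasDerivAt_toEuclideanCLM_apply
    (hW.hasEntrywiseDerivAt_conjTranspose_mul hU (hD₀ s)) w
  have hbound (s : ℝ) :
      ‖toEuclideanCLM (𝕜 := ℂ) (-I • ((W s)ᴴ * (D s - D₀ s) * U s)) w‖ ≤ κ * ‖w‖ := by
    have hWs : (W s)ᴴ ∈ unitaryGroup (Fin 2) ℂ := Unitary.star_mem (hWu s)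
    rw [map_smul, map_mul, map_mul, _root_.smul_apply, norm_smul, norm_neg, Complex.norm_I,
      one_mul, mul_apply_eq_comp, mul_apply_eq_comp,
      norm_toEuclideanCLM_apply_of_mem_unitaryGroup hWs,
      ← norm_toEuclideanCLM_apply_of_mem_unitaryGroup (hUu s) w]
    exact hκ s _
  have hu0 : u 0 = w := by simp [u, hW.1, hU.1]
  have hWW : W T * (W T)ᴴ = 1 := mem_unitaryGroup_iff.1 (hWu T)
  have hWu_T : toEuclideanCLM (𝕜 := ℂ) (W T) (u T) = toEuclideanCLM (𝕜 := ℂ) (U T) w := by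
    simp only [u, ← mul_apply_eq_comp, ← map_mul, ← Matrix.mul_assoc, hWW, one_mul]
  calc ‖toEuclideanCLM (𝕜 := ℂ) (U T) w - toEuclideanCLM (𝕜 := ℂ) (W T) w‖
      = ‖toEuclideanCLM (𝕜 := ℂ) (W T) (u T - u 0)‖ := by rw [map_sub, hWu_T, hu0]
    _ = ‖u T - u 0‖ := norm_toEuclideanCLM_apply_of_mem_unitaryGroup (hWu T) _
    _ ≤ κ * ‖w‖ * (T - 0) :=
        norm_image_sub_le_of_norm_deriv_le_segment' (fun s _ => (hderiv s).hasDerivWithinAt)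
          (fun s _ => hbound s) T ⟨hT, le_rfl⟩
    _ = κ * ‖w‖ * T := by rw [sub_zero]

end IsFundamentalSolution

theorem Dhat_isHermitian (ω R vD ξ₁ ξ₂ T : ℝ) : (Dhat ω R vD ξ₁ ξ₂ T).IsHermitian := by
  ext i j
  fin_cases i <;> fin_cases j <;>
    simp [Dhat, ← Complex.exp_conj, sub_eq_add_neg]

theorem Dhat_sub_Dhat_zero (ω R vD ξ₁ ξ₂ T : ℝ) :
    Dhat ω R vD ξ₁ ξ₂ T - Dhat ω R vD 0 0 T =
      (vD : ℂ) • !![0, (ξ₁ : ℂ) + I * ξ₂; star ((ξ₁ : ℂ) + I * ξ₂), 0] := by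
  ext i j
  fin_cases i <;> fin_cases j <;> simp [Dhat] <;> ring

theorem conjTranspose_mul_self_antidiagonal (z : ℂ) :
    (!![0, z; star z, 0])ᴴ * !![0, z; star z, 0] = ((‖z‖ ^ 2 : ℝ) : ℂ) • 1 := by
  ext i j
  fin_cases i <;> fin_cases j <;> simp [mul_apply, Fin.sum_univ_two, Complex.conj_mul']

theorem norm_Dhat_sub_Dhat_zero_apply (ω R vD ξ₁ ξ₂ T : ℝ) (x : EuclideanSpace ℂ (Fin 2)) :
    ‖toEuclideanCLM (𝕜 := ℂ) (Dhat ω R vD ξ₁ ξ₂ T - Dhat ω R vD 0 0 T) x‖ =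
      |vD| * √(ξ₁ ^ 2 + ξ₂ ^ 2) * ‖x‖ := by
  have hz : ‖(ξ₁ : ℂ) + I * ξ₂‖ = √(ξ₁ ^ 2 + ξ₂ ^ 2) := by
    rw [mul_comm, Complex.norm_add_mul_I]
  rw [Dhat_sub_Dhat_zero, map_smul, _root_.smul_apply, norm_smul, Complex.norm_real,
    Real.norm_eq_abs, norm_toEuclideanCLM_apply_of_conjTranspose_mul_self (norm_nonneg _)
      (conjTranspose_mul_self_antidiagonal _), hz, mul_assoc]

section RotatingFrame

def rabiFrequency (ω R vD : ℝ) : ℝ := √(ω ^ 2 / 4 + R ^ 2 * vD ^ 2)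

def frameFrequencies (ω : ℝ) : Fin 2 → ℂ := ![ω / 2, -(ω / 2)]

def rotatingFrame (ω t : ℝ) : Matrix (Fin 2) (Fin 2) ℂ :=
  diagonal fun k => exp (I * t * frameFrequencies ω k)

def rotatingHamiltonian (ω R vD : ℝ) : Matrix (Fin 2) (Fin 2) ℂ :=
  diagonal (frameFrequencies ω) + (R * vD : ℂ) • !![0, 1; 1, 0]

def rotatingPropagator (ω R vD t : ℝ) : Matrix (Fin 2) (Fin 2) ℂ :=
  (Real.cos (rabiFrequency ω R vD * t) : ℂ) • 1 -
    (I * Real.sin (rabiFrequency ω R vD * t) / rabiFrequency ω R vD) • rotatingHamiltonian ω R vD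

def unperturbedSolution (ω R vD t : ℝ) : Matrix (Fin 2) (Fin 2) ℂ :=
  rotatingFrame ω t * rotatingPropagator ω R vD t

variable {ω R vD : ℝ}

theorem rabiFrequency_pos (hω : 0 < ω) : 0 < rabiFrequency ω R vD :=
  Real.sqrt_pos.2 (by positivity)

theorem rotatingHamiltonian_isHermitian : (rotatingHamiltonian ω R vD).IsHermitian := by
  ext i j
  fin_cases i <;> fin_cases j <;> simp [rotatingHamiltonian, frameFrequencies, Complex.conj_ofReal]

theorem rotatingHamiltonian_mul_self :
    rotatingHamiltonian ω R vD * rotatingHamiltonian ω R vD =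
      ((rabiFrequency ω R vD ^ 2 : ℝ) : ℂ) • 1 := by
  rw [rabiFrequency, Real.sq_sqrt (by positivity)]
  ext i j
  fin_cases i <;> fin_cases j <;>
    simp [rotatingHamiltonian, frameFrequencies, mul_apply, Fin.sum_univ_two] <;> ring

theorem hasEntrywiseDerivAt_rotatingFrame (ω t : ℝ) :
    HasEntrywiseDerivAt (rotatingFrame ω)
      (I • (rotatingFrame ω t * diagonal (frameFrequencies ω))) t := by
  have hphase (k : Fin 2) : HasDerivAt (fun s : ℝ => exp (I * s * frameFrequencies ω k))
      (exp (I * t * frameFrequencies ω k) * (I * 1 * frameFrequencies ω k)) t :=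
    ((((hasDerivAt_id t).ofReal_comp).const_mul I).mul_const _).cexp
  unfold rotatingFrame
  convert hasEntrywiseDerivAt_diagonal hphase using 1
  rw [diagonal_mul_diagonal, ← diagonal_smul]
  congr 1
  ext k
  simp only [Pi.smul_apply, smul_eq_mul]
  ring

theorem Dhat_zero_mul_rotatingFrame (t : ℝ) :
    Dhat ω R vD 0 0 t * rotatingFrame ω t =
      rotatingFrame ω t * ((R * vD : ℂ) • !![0, 1; 1, 0]) := by
  ext i j
  fin_cases i <;> fin_cases j <;>
    simp [Dhat, rotatingFrame, frameFrequencies, mul_apply, Fin.sum_univ_two] <;>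
    rw [mul_assoc, mul_assoc, ← Complex.exp_add] <;> ring_nf

theorem hasEntrywiseDerivAt_rotatingPropagator (hω : 0 < ω) (t : ℝ) :
    HasEntrywiseDerivAt (rotatingPropagator ω R vD)
      (-I • (rotatingHamiltonian ω R vD * rotatingPropagator ω R vD t)) t := by
  unfold rotatingPropagator
  have hΩ : (rabiFrequency ω R vD : ℂ) ≠ 0 :=
    Complex.ofReal_ne_zero.2 (rabiFrequency_pos hω).ne'
  have hΩt := (hasDerivAt_id' t).const_mul (rabiFrequency ω R vD)
  have hcos := hΩt.cos.ofReal_comp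
  have hsin := (hΩt.sin.ofReal_comp.const_mul I).div_const (rabiFrequency ω R vD : ℂ)
  convert (hasEntrywiseDerivAt_smul_const hcos 1).sub
    (hasEntrywiseDerivAt_smul_const hsin (rotatingHamiltonian ω R vD)) using 1
  rw [Matrix.mul_sub, Matrix.mul_smul, Matrix.mul_smul, Matrix.mul_one,
    rotatingHamiltonian_mul_self]
  match_scalars <;> field_simp
  rw [Complex.I_sq, neg_one_mul]

theorem isFundamentalSolution_unperturbedSolution (hω : 0 < ω) :
    IsFundamentalSolution (Dhat ω R vD 0 0) (unperturbedSolution ω R vD) := by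
  refine ⟨?_, fun t => ?_⟩
  · simp [unperturbedSolution, rotatingFrame, rotatingPropagator]
  show HasEntrywiseDerivAt (fun s => rotatingFrame ω s * rotatingPropagator ω R vD s)
    (-I • (Dhat ω R vD 0 0 t * (rotatingFrame ω t * rotatingPropagator ω R vD t))) t
  convert (hasEntrywiseDerivAt_rotatingFrame ω t).mul
    (hasEntrywiseDerivAt_rotatingPropagator (R := R) (vD := vD) hω t) using 1
  rw [← Matrix.mul_assoc, Dhat_zero_mul_rotatingFrame]
  simp only [rotatingHamiltonian, Matrix.mul_add, Matrix.add_mul, Matrix.mul_smul,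
    Matrix.smul_mul, Matrix.mul_assoc]
  module

theorem rotatingFrame_period (hω : ω ≠ 0) : rotatingFrame ω (2 * π / ω) = -1 := by
  have hω' : (ω : ℂ) ≠ 0 := Complex.ofReal_ne_zero.2 hω
  have hphase : I * (2 * π / ω) * (ω / 2) = π * I := by field_simp
  ext i j
  fin_cases i <;> fin_cases j <;>
    simp only [rotatingFrame, frameFrequencies] <;>
    simp [hphase, mul_neg, Complex.exp_neg]

theorem conjTranspose_mul_self_rotatingPropagator_add_one (hω : 0 < ω) (t : ℝ) :
    (rotatingPropagator ω R vD t + 1)ᴴ * (rotatingPropagator ω R vD t + 1) =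
      (((2 * Real.cos (rabiFrequency ω R vD * t / 2)) ^ 2 : ℝ) : ℂ) • 1 := by
  have hΩ : (rabiFrequency ω R vD : ℂ) ≠ 0 :=
    Complex.ofReal_ne_zero.2 (rabiFrequency_pos hω).ne'
  set x := (rabiFrequency ω R vD * t : ℂ)
  have hhalf : Complex.cos (x / 2) ^ 2 = 1 / 2 + Complex.cos x / 2 := by
    rw [Complex.cos_sq, mul_div_cancel₀ _ two_ne_zero]
  simp only [rotatingPropagator, conjTranspose_add, conjTranspose_sub, conjTranspose_smul,
    conjTranspose_one, rotatingHamiltonian_isHermitian.eq, Matrix.add_mul, Matrix.sub_mul,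
    Matrix.mul_add, Matrix.mul_sub, Matrix.smul_mul, Matrix.mul_smul, Matrix.one_mul,
    Matrix.mul_one, rotatingHamiltonian_mul_self, Complex.star_def, map_div₀, map_mul,
    Complex.conj_I, Complex.conj_ofReal]
  match_scalars <;> field_simp
  · linear_combination Complex.sin_sq_add_cos_sq x - Complex.sin x ^ 2 * Complex.I_sq - 4 * hhalf
  · ring

theorem norm_unperturbedSolution_period_apply_sub (hω : 0 < ω) (x : EuclideanSpace ℂ (Fin 2)) :
    ‖toEuclideanCLM (𝕜 := ℂ) (unperturbedSolution ω R vD (2 * π / ω)) x - x‖ =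
      |2 * Real.cos (π * rabiFrequency ω R vD / ω)| * ‖x‖ := by
  have hangle : rabiFrequency ω R vD * (2 * π / ω) / 2 = π * rabiFrequency ω R vD / ω := by
    field_simp
  have hV := conjTranspose_mul_self_rotatingPropagator_add_one (R := R) (vD := vD) hω (2 * π / ω)
  rw [hangle, ← sq_abs] at hV
  have hW : unperturbedSolution ω R vD (2 * π / ω) - 1 =
      -(rotatingPropagator ω R vD (2 * π / ω) + 1) := by
    rw [unperturbedSolution, rotatingFrame_period hω.ne', neg_one_mul, neg_add']
  calc ‖toEuclideanCLM (𝕜 := ℂ) (unperturbedSolution ω R vD (2 * π / ω)) x - x‖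
      = ‖toEuclideanCLM (𝕜 := ℂ) (-(rotatingPropagator ω R vD (2 * π / ω) + 1)) x‖ := by
        rw [← hW, map_sub, map_one]
        rfl
    _ = ‖toEuclideanCLM (𝕜 := ℂ) (rotatingPropagator ω R vD (2 * π / ω) + 1) x‖ := by
        rw [map_neg, _root_.neg_apply, norm_neg]
    _ = _ := norm_toEuclideanCLM_apply_of_conjTranspose_mul_self (abs_nonneg _) hV x

theorem cos_pi_mul_rabiFrequency_div_neg (hω : 0 < ω) (hRvD : R * vD ≠ 0)
    (hsmall : R ^ 2 * vD ^ 2 < 2 * ω ^ 2) : Real.cos (π * rabiFrequency ω R vD / ω) < 0 := by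
  have hΩ := rabiFrequency_pos (R := R) (vD := vD) hω
  have hsq : rabiFrequency ω R vD ^ 2 = ω ^ 2 / 4 + (R * vD) ^ 2 :=
    (Real.sq_sqrt (by positivity)).trans (by ring)
  have hlow : ω / 2 < rabiFrequency ω R vD := by
    nlinarith [pow_pos (abs_pos.2 hRvD) 2, sq_abs (R * vD)]
  have hhigh : rabiFrequency ω R vD < 3 * ω / 2 := by nlinarith
  apply Real.cos_neg_of_pi_div_two_lt_of_lt
  · rw [lt_div_iff₀ hω]
    nlinarith [Real.pi_pos]
  · rw [div_lt_iff₀ hω]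
    nlinarith [Real.pi_pos]

theorem norm_apply_sub_unperturbedSolution_apply_le (hω : 0 < ω) {ξ₁ ξ₂ : ℝ}
    {U : ℝ → Matrix (Fin 2) (Fin 2) ℂ} (hU : IsFundamentalSolution (Dhat ω R vD ξ₁ ξ₂) U) {T : ℝ}
    (hT : 0 ≤ T) (w : EuclideanSpace ℂ (Fin 2)) :
    ‖toEuclideanCLM (𝕜 := ℂ) (U T) w -
        toEuclideanCLM (𝕜 := ℂ) (unperturbedSolution ω R vD T) w‖ ≤
      |vD| * √(ξ₁ ^ 2 + ξ₂ ^ 2) * ‖w‖ * T :=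
  (isFundamentalSolution_unperturbedSolution hω).norm_apply_sub_apply_le hU
    (Dhat_isHermitian ω R vD 0 0) (Dhat_isHermitian ω R vD ξ₁ ξ₂)
    (fun t x => (norm_Dhat_sub_Dhat_zero_apply ω R vD ξ₁ ξ₂ t x).le) hT w

end RotatingFrame

/-- **Uniform resolvent-type lower bound near the gap** (quantitative form of
Proposition 3.4): if `R v_D ≠ 0` and `R²v_D² < 2ω²`, then there exist `d₀, g, c > 0` such
that for every `ξ` with `‖ξ‖ ≤ d₀`, every fundamental solution `U` of
`i U′ = D̂(T;ξ) U`, every `y` with `|y| ≤ g` and every `w ∈ ℂ²` (Euclidean norm),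
`‖U(T_per) w − e^{iy} w‖ ≥ c ‖w‖`. -/
theorem resolvent_lower_bound_near_gap
    (ω R vD : ℝ) (hω : 0 < ω) (hRvD : R * vD ≠ 0) (hsmall : R ^ 2 * vD ^ 2 < 2 * ω ^ 2)
    (Tper : ℝ) (hTper : Tper = 2 * Real.pi / ω) :
    ∃ d₀ > (0 : ℝ), ∃ g > (0 : ℝ), ∃ c > (0 : ℝ),
      ∀ ξ₁ ξ₂ : ℝ, Real.sqrt (ξ₁ ^ 2 + ξ₂ ^ 2) ≤ d₀ →
        ∀ U : ℝ → Matrix (Fin 2) (Fin 2) ℂ,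
          IsFundamentalSolution (Dhat ω R vD ξ₁ ξ₂) U →
          ∀ y : ℝ, |y| ≤ g →
            ∀ w : EuclideanSpace ℂ (Fin 2),
              c * ‖w‖ ≤
                ‖(WithLp.equiv 2 (Fin 2 → ℂ)).symm
                    ((U Tper).mulVec ((WithLp.equiv 2 (Fin 2 → ℂ)) w)) -
                  Complex.exp (Complex.I * y) • w‖ := by
  subst hTper
  set κ := |vD| * (2 * π / ω)
  set ρ := |2 * Real.cos (π * rabiFrequency ω R vD / ω)|
  have hκ : 0 < κ := mul_pos (abs_pos.2 (right_ne_zero_of_mul hRvD)) (by positivity)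
  have hρ : 0 < ρ :=
    abs_pos.2 (mul_ne_zero two_ne_zero (cos_pi_mul_rabiFrequency_div_neg hω hRvD hsmall).ne)
  refine ⟨ρ / (4 * κ), by positivity, ρ / 4, by positivity, ρ / 2, by positivity,
    fun ξ₁ ξ₂ hξ U hU y hy w => ?_⟩
  show ρ / 2 * ‖w‖ ≤ ‖toEuclideanCLM (𝕜 := ℂ) (U (2 * π / ω)) w - exp (I * y) • w‖
  set Uw := toEuclideanCLM (𝕜 := ℂ) (U (2 * π / ω)) w
  set Ww := toEuclideanCLM (𝕜 := ℂ) (unperturbedSolution ω R vD (2 * π / ω)) w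
  have hW : ‖Ww - w‖ = ρ * ‖w‖ := norm_unperturbedSolution_period_apply_sub hω w
  have hUW : ‖Uw - Ww‖ ≤ ρ / 4 * ‖w‖ :=
    calc ‖Uw - Ww‖ ≤ |vD| * √(ξ₁ ^ 2 + ξ₂ ^ 2) * ‖w‖ * (2 * π / ω) :=
          norm_apply_sub_unperturbedSolution_apply_le hω hU (by positivity) w
      _ = κ * √(ξ₁ ^ 2 + ξ₂ ^ 2) * ‖w‖ := by ring
      _ ≤ κ * (ρ / (4 * κ)) * ‖w‖ := by gcongr
      _ = ρ / 4 * ‖w‖ := by field_simp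
  have hphase : ‖exp (I * y) • w - w‖ ≤ ρ / 4 * ‖w‖ :=
    (norm_exp_I_mul_smul_sub_le y w).trans (by gcongr)
  have h₁ := norm_sub_le_norm_sub_add_norm_sub Ww Uw w
  have h₂ := norm_sub_le_norm_sub_add_norm_sub Uw (exp (I * y) • w) w
  rw [norm_sub_rev Ww Uw] at h₁
  linarith
end
end

section
/- WKB asymptotics of the monodromy matrix at large momentum (Section 9): Let T_per > 0 and let A = (A₁, A₂) : ℝ → ℝ² be continuously differentiable and T_per-periodic with ∫₀^{T_per} A₁(T) dT = ∫₀^{T_per} A₂(T) dT = 0. Then there exist constants C > 0 and ξ₀ > 0 such that for every real ξ with |ξ| ≥ ξ₀ and every fundamental solution U_ξ of i U′(T) = [ξ σ₁ + A₁(T) σ₁ − A₂(T) σ₂] U(T), the monodromy matrix satisfies ‖U_ξ(T_per) − exp(−i ξ T_per σ₁)‖ ≤ C / |ξ| (in the operator norm on ℂ²). Note that exp(−i ξ T_per σ₁) is unitary with eigenvalues e^{−iξ T_per} and e^{iξ T_per}. -/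
open Matrix Complex intervalIntegral

noncomputable section

/-- The Pauli matrix `σ₁ = [[0,1],[1,0]]`. -/
def pauli1 : Matrix (Fin 2) (Fin 2) ℂ := !![0, 1; 1, 0]

/-- The Pauli matrix `σ₂ = [[0,−i],[i,0]]`. -/
def pauli2 : Matrix (Fin 2) (Fin 2) ℂ := !![0, -Complex.I; Complex.I, 0]

/-- The WKB generator `D(T) = ξ σ₁ + A₁(T) σ₁ − A₂(T) σ₂`. -/
def Dwkb (A : ℝ → ℝ × ℝ) (ξ : ℝ) (T : ℝ) : Matrix (Fin 2) (Fin 2) ℂ :=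
  (ξ : ℂ) • pauli1 + ((A T).1 : ℂ) • pauli1 - ((A T).2 : ℂ) • pauli2

/-!
Conjugating by the free rotation `rot θ = exp (i θ σ₁)`, with the phase `θ t = ξ t + ∫₀ᵗ A₁`,
removes the `σ₁`-part of the generator: `W = rot θ · U` solves `W' = C W` with the coupling
`C = i A₂ σ₂ rot (-2θ)`, which is bounded but oscillates at frequency `≈ 2ξ`. Integrating by parts
against this phase gives `‖∫₀ᵗ C‖ = O(1/|ξ|)` uniformly on `[0, T_per]`, and Gronwall's inequality
for `W - 1 - ∫₀ᵗ C` turns this into `‖W(T_per) - 1‖ = O(1/|ξ|)`. Since `A₁` has mean zero,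
`θ(T_per) = ξ T_per`, so `U(T_per) - exp (-i ξ T_per σ₁) = rot (-ξ T_per) (W(T_per) - 1)`, and
`rot` is unitary.
-/

open Set
-- In the ℓ² operator norm the rotations and Pauli matrices have norm one, and
-- `Matrix.l2_opNorm_mulVec` bounds the action on `EuclideanSpace`.
open scoped Matrix.Norms.L2Operator

theorem norm_integral_smul_deriv_le {E : Type*} [NormedAddCommGroup E] [NormedSpace ℝ E]
    [CompleteSpace E] {u u' : ℝ → ℝ} {v v' : ℝ → E} {a b A B c : ℝ} (hab : a ≤ b)
    (hu : ∀ x ∈ Icc a b, HasDerivAt u (u' x) x) (hv : ∀ x ∈ Icc a b, HasDerivAt v (v' x) x)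
    (hu' : ContinuousOn u' (Icc a b)) (hv' : ContinuousOn v' (Icc a b))
    (huA : ∀ x ∈ Icc a b, |u x| ≤ A) (hu'B : ∀ x ∈ Icc a b, |u' x| ≤ B)
    (hvc : ∀ x ∈ Icc a b, ‖v x‖ ≤ c) :
    ‖∫ x in a..b, u x • v' x‖ ≤ (2 * A + B * (b - a)) * c := by
  rw [← uIcc_of_le hab] at hu hv hu' hv'
  rw [integral_smul_deriv_eq_deriv_smul hu hv hu'.intervalIntegrable hv'.intervalIntegrable]
  have hend : ∀ x ∈ Icc a b, ‖u x • v x‖ ≤ A * c := fun x hx => by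
    rw [norm_smul, Real.norm_eq_abs]
    exact mul_le_mul (huA x hx) (hvc x hx) (norm_nonneg _) ((abs_nonneg _).trans (huA x hx))
  have hbulk : ‖∫ x in a..b, u' x • v x‖ ≤ B * c * |b - a| := by
    refine norm_integral_le_of_norm_le_const fun x hx => ?_
    have hx' : x ∈ Icc a b := Ioc_subset_Icc_self (uIoc_of_le hab ▸ hx)
    rw [norm_smul, Real.norm_eq_abs]
    exact mul_le_mul (hu'B x hx') (hvc x hx') (norm_nonneg _) ((abs_nonneg _).trans (hu'B x hx'))
  calc ‖u b • v b - u a • v a - ∫ x in a..b, u' x • v x‖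
      ≤ ‖u b • v b‖ + ‖u a • v a‖ + ‖∫ x in a..b, u' x • v x‖ :=
        norm_sub_le_of_le (norm_sub_le _ _) le_rfl
    _ ≤ A * c + A * c + B * c * |b - a| := by
      gcongr
      · exact hend b (right_mem_Icc.2 hab)
      · exact hend a (left_mem_Icc.2 hab)
    _ = (2 * A + B * (b - a)) * c := by rw [abs_of_nonneg (sub_nonneg.2 hab)]; ring

theorem gronwallBound_zero_mul (K ε x : ℝ) :
    gronwallBound 0 K (K * ε) x = ε * (Real.exp (K * x) - 1) := by
  rcases eq_or_ne K 0 with rfl | hK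
  · simp [gronwallBound_K0]
  · rw [gronwallBound_of_K_ne_0 hK]
    field_simp
    ring

theorem norm_sub_one_le_of_hasDerivAt_mul {R : Type*} [NormedRing R] [NormedSpace ℝ R]
    [CompleteSpace R] {W C : ℝ → R} {T K ε : ℝ} (hT : 0 ≤ T) (hC : Continuous C)
    (hW : ∀ t, HasDerivAt W (C t * W t) t) (hW0 : W 0 = 1) (hCK : ∀ t ∈ Icc 0 T, ‖C t‖ ≤ K)
    (hCε : ∀ t ∈ Icc 0 T, ‖∫ s in 0..t, C s‖ ≤ ε) :
    ‖W T - 1‖ ≤ ε * Real.exp (K * T) := by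
  set F : ℝ → R := fun t => ∫ s in 0..t, C s
  have hF : ∀ t, HasDerivAt F (C t) t := fun t =>
    integral_hasDerivAt_right (hC.intervalIntegrable 0 t) (hC.stronglyMeasurableAtFilter _ _)
      hC.continuousAt
  -- Gronwall is applied to `G`, whose forcing term `C F` is `O(ε)`.
  set G : ℝ → R := fun t => W t - 1 - F t
  have hG : ∀ t, HasDerivAt G (C t * G t + C t * F t) t := fun t => by
    refine (((hW t).sub_const 1).sub (hF t)).congr_deriv ?_
    simp only [G]
    noncomm_ring
  have hGT : ‖G T‖ ≤ gronwallBound 0 K (K * ε) (T - 0) := by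
    refine norm_le_gronwallBound_of_norm_deriv_right_le
      (continuous_iff_continuousAt.2 fun t => (hG t).continuousAt).continuousOn
      (fun t _ => (hG t).hasDerivWithinAt) (by simp [G, F, hW0]) (fun t ht => ?_) T ⟨hT, le_rfl⟩
    have ht' : t ∈ Icc 0 T := Ico_subset_Icc_self ht
    have hK : 0 ≤ K := (norm_nonneg _).trans (hCK t ht')
    calc ‖C t * G t + C t * F t‖ ≤ ‖C t‖ * ‖G t‖ + ‖C t‖ * ‖F t‖ :=
          norm_add_le_of_le (norm_mul_le _ _) (norm_mul_le _ _)
      _ ≤ K * ‖G t‖ + K * ε := by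
          gcongr
          · exact hCK t ht'
          · exact hCK t ht'
          · exact hCε t ht'
  calc ‖W T - 1‖ = ‖G T + F T‖ := by simp only [G, sub_add_cancel]
    _ ≤ ε * (Real.exp (K * T) - 1) + ε :=
      norm_add_le_of_le (by simpa [gronwallBound_zero_mul] using hGT) (hCε T ⟨hT, le_rfl⟩)
    _ = ε * Real.exp (K * T) := by ring

theorem abs_quotient_deriv_le {q q' p p' M ξ : ℝ} (hq : |q| ≤ M) (hq' : |q'| ≤ M)
    (hp' : |p'| ≤ 2 * M) (hp : |ξ| ≤ |p|) (hξ : 1 ≤ |ξ|) :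
    |(q' * p - q * p') / p ^ 2| ≤ (M + 2 * M ^ 2) / |ξ| := by
  have hM : 0 ≤ M := (abs_nonneg _).trans hq
  have hp1 : 1 ≤ |p| := hξ.trans hp
  have hnum : |q' * p - q * p'| ≤ M * |p| + M * (2 * M) := by
    refine (abs_sub _ _).trans ?_
    rw [abs_mul, abs_mul]
    gcongr
  rw [abs_div, abs_pow, div_le_div_iff₀ (by positivity) (by linarith)]
  calc |q' * p - q * p'| * |ξ| ≤ (M * |p| + M * (2 * M)) * |p| := by gcongr
    _ ≤ (M + 2 * M ^ 2) * |p| ^ 2 := by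
      nlinarith [mul_nonneg (mul_nonneg (mul_nonneg hM hM) (abs_nonneg p)) (sub_nonneg.2 hp1)]

theorem exists_bound_Icc_of_contDiff {a b : ℝ → ℝ} (ha : ContDiff ℝ 1 a) (hb : ContDiff ℝ 1 b)
    (T : ℝ) : ∃ M ≥ 1, ∀ s ∈ Icc 0 T,
      |a s| ≤ M ∧ |b s| ≤ M ∧ |deriv a s| ≤ M ∧ |deriv b s| ≤ M := by
  have ha' := ha.continuous_deriv le_rfl
  have hb' := hb.continuous_deriv le_rfl
  obtain ⟨M, hM⟩ := isCompact_Icc.exists_bound_of_continuousOn (s := Icc 0 T)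
    (f := fun s => |a s| + |b s| + |deriv a s| + |deriv b s|)
    (by fun_prop : Continuous _).continuousOn
  refine ⟨max M 1, le_max_right _ _, fun s hs => ?_⟩
  have hsum := (le_abs_self _).trans ((hM s hs).trans (le_max_left M 1))
  have := abs_nonneg (a s); have := abs_nonneg (b s)
  have := abs_nonneg (deriv a s); have := abs_nonneg (deriv b s)
  refine ⟨?_, ?_, ?_, ?_⟩ <;> linarith

theorem Matrix.hasDerivAt_of_hasDerivAt_apply {m n : Type*} [Fintype m] [Fintype n]
    [DecidableEq n] {F : ℝ → Matrix m n ℂ} {F' : Matrix m n ℂ} {t : ℝ}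
    (h : ∀ i j, HasDerivAt (fun s => F s i j) (F' i j) t) : HasDerivAt F F' t := by
  rw [hasDerivAt_iff_tendsto_slope]
  exact tendsto_pi_nhds.2 fun i => tendsto_pi_nhds.2 fun j =>
    hasDerivAt_iff_tendsto_slope.1 (h i j)

def rot (t : ℝ) : Matrix (Fin 2) (Fin 2) ℂ := NormedSpace.exp (t • (I • pauli1))

theorem rot_zero : rot 0 = 1 := by simp [rot]

theorem rot_add (s t : ℝ) : rot (s + t) = rot s * rot t := by
  rw [rot, add_smul]
  exact Matrix.exp_add_of_commute _ _ (((Commute.refl _).smul_left _).smul_right _)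

theorem pauli1_mul_pauli1 : pauli1 * pauli1 = 1 := by
  ext i j; fin_cases i <;> fin_cases j <;> simp [pauli1]

theorem pauli2_mul_pauli2 : pauli2 * pauli2 = 1 := by
  ext i j; fin_cases i <;> fin_cases j <;> simp [pauli2]

theorem pauli2_mul_pauli1_mul_pauli2 : pauli2 * pauli1 * pauli2 = -pauli1 := by
  ext i j; fin_cases i <;> fin_cases j <;> simp [pauli1, pauli2]

theorem pauli1_mem_unitary : pauli1 ∈ unitary (Matrix (Fin 2) (Fin 2) ℂ) := by
  have hstar : star pauli1 = pauli1 := by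
    ext i j; fin_cases i <;> fin_cases j <;> simp [pauli1]
  rw [Unitary.mem_iff, hstar, pauli1_mul_pauli1]
  exact ⟨rfl, rfl⟩

theorem pauli2_mem_unitary : pauli2 ∈ unitary (Matrix (Fin 2) (Fin 2) ℂ) := by
  have hstar : star pauli2 = pauli2 := by
    ext i j; fin_cases i <;> fin_cases j <;> simp [pauli2]
  rw [Unitary.mem_iff, hstar, pauli2_mul_pauli2]
  exact ⟨rfl, rfl⟩

theorem pauli2_mul_rot (t : ℝ) : pauli2 * rot t = rot (-t) * pauli2 := by
  have hconj := Matrix.exp_conj pauli2 (t • (I • pauli1)) (.of_mul_eq_one _ pauli2_mul_pauli2)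
  rw [Matrix.inv_eq_left_inv pauli2_mul_pauli2, mul_smul_comm, smul_mul_assoc, mul_smul_comm,
    smul_mul_assoc, pauli2_mul_pauli1_mul_pauli2] at hconj
  rw [rot, rot, neg_smul, ← smul_neg, ← smul_neg, hconj, mul_assoc, pauli2_mul_pauli2, mul_one]

theorem rot_mem_unitary (t : ℝ) : rot t ∈ unitary (Matrix (Fin 2) (Fin 2) ℂ) := by
  have hstar : star (rot t) = rot (-t) := by
    rw [star_eq_conjTranspose, rot, ← Matrix.exp_conjTranspose, rot]
    congr 1
    ext i j; fin_cases i <;> fin_cases j <;> simp [pauli1]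
  rw [Unitary.mem_iff, hstar, ← rot_add, ← rot_add, neg_add_cancel, add_neg_cancel, rot_zero]
  exact ⟨rfl, rfl⟩

theorem hasDerivAt_rot_comp {θ : ℝ → ℝ} {θ' t : ℝ} (hθ : HasDerivAt θ θ' t) :
    HasDerivAt (fun s => rot (θ s)) (θ' • (rot (θ t) * (I • pauli1))) t :=
  (hasDerivAt_exp_smul_const (I • pauli1) (θ t)).scomp t hθ

@[fun_prop]
theorem continuous_rot : Continuous rot :=
  continuous_iff_continuousAt.2 fun t => (hasDerivAt_rot_comp (hasDerivAt_id t)).continuousAt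

theorem hasDerivAt_rot_mul {θ : ℝ → ℝ} {U : ℝ → Matrix (Fin 2) (Fin 2) ℂ} {p q t : ℝ}
    (hθ : HasDerivAt θ p t)
    (hU : HasDerivAt U ((-I) • (((p : ℂ) • pauli1 - (q : ℂ) • pauli2) * U t)) t) :
    HasDerivAt (fun s => rot (θ s) * U s)
      ((I * q) • (pauli2 * rot (-(2 * θ t))) * (rot (θ t) * U t)) t := by
  refine ((hasDerivAt_rot_comp hθ).mul hU).congr_deriv ?_
  have hσ₂ : rot (θ t) * pauli2 = pauli2 * rot (-(2 * θ t)) * rot (θ t) := by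
    rw [mul_assoc, ← rot_add, pauli2_mul_rot]
    ring_nf
  simp only [← Complex.coe_smul, smul_mul_assoc, mul_smul_comm, sub_mul, mul_sub, smul_sub,
    smul_smul, ← mul_assoc, hσ₂]
  module

def wkbPhase (a : ℝ → ℝ) (ξ t : ℝ) : ℝ := ξ * t + ∫ s in 0..t, a s

theorem hasDerivAt_wkbPhase {a : ℝ → ℝ} (ha : Continuous a) (ξ t : ℝ) :
    HasDerivAt (wkbPhase a ξ) (ξ + a t) t := by
  have hint : HasDerivAt (fun t => ∫ s in 0..t, a s) (a t) t :=
    integral_hasDerivAt_right (ha.intervalIntegrable 0 t) (ha.stronglyMeasurableAtFilter _ _)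
      ha.continuousAt
  exact (((hasDerivAt_id' t).const_mul ξ).add hint).congr_deriv (by rw [mul_one])

@[fun_prop]
theorem continuous_wkbPhase {a : ℝ → ℝ} (ha : Continuous a) (ξ : ℝ) : Continuous (wkbPhase a ξ) :=
  continuous_iff_continuousAt.2 fun t => (hasDerivAt_wkbPhase ha ξ t).continuousAt

def wkbCoupling (a b : ℝ → ℝ) (ξ t : ℝ) : Matrix (Fin 2) (Fin 2) ℂ :=
  (I * b t) • (pauli2 * rot (-(2 * wkbPhase a ξ t)))

theorem continuous_wkbCoupling {a b : ℝ → ℝ} (ha : Continuous a) (hb : Continuous b) (ξ : ℝ) :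
    Continuous (wkbCoupling a b ξ) := by
  unfold wkbCoupling
  fun_prop

theorem norm_wkbCoupling (a b : ℝ → ℝ) (ξ t : ℝ) : ‖wkbCoupling a b ξ t‖ = |b t| := by
  rw [wkbCoupling, norm_smul, norm_mul, norm_I, one_mul, norm_real, Real.norm_eq_abs,
    CStarRing.norm_mem_unitary_mul _ pauli2_mem_unitary,
    CStarRing.norm_of_mem_unitary (rot_mem_unitary _), mul_one]

theorem wkbCoupling_eq_div_smul (a b : ℝ → ℝ) (ξ s : ℝ) {p : ℝ} (hp : p ≠ 0) :
    wkbCoupling a b ξ s =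
      (b s / p) • (pauli2 * (p • (rot (-(2 * wkbPhase a ξ s)) * (I • pauli1))) * pauli1) := by
  have hp' : (p : ℂ) ≠ 0 := ofReal_ne_zero.2 hp
  simp only [wkbCoupling, ← Complex.coe_smul, mul_smul_comm, smul_mul_assoc, smul_smul,
    mul_assoc, pauli1_mul_pauli1, mul_one]
  congr 1
  push_cast
  field_simp

theorem norm_integral_wkbCoupling_le {a b : ℝ → ℝ} (ha : ContDiff ℝ 1 a) (hb : ContDiff ℝ 1 b)
    {M ξ t : ℝ} (ht : 0 ≤ t)
    (hM : ∀ s ∈ Icc 0 t, |a s| ≤ M ∧ |b s| ≤ M ∧ |deriv a s| ≤ M ∧ |deriv b s| ≤ M)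
    (hξ : 2 * M ≤ |ξ|) (hξ1 : 1 ≤ |ξ|) :
    ‖∫ s in 0..t, wkbCoupling a b ξ s‖ ≤ (2 * M + (M + 2 * M ^ 2) * t) / |ξ| := by
  -- `p` is the derivative of the phase `φ = -2θ` of the coupling.
  set p : ℝ → ℝ := fun s => -(2 * (ξ + a s)) with hp_def
  set φ : ℝ → ℝ := fun s => -(2 * wkbPhase a ξ s)
  have hp : ∀ s ∈ Icc 0 t, |ξ| ≤ |p s| := fun s hs => by
    have h := abs_sub (ξ + a s) (a s)
    rw [add_sub_cancel_right] at h
    rw [hp_def, abs_neg, abs_mul, abs_two]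
    linarith [(hM s hs).1]
  have hp0 : ∀ s ∈ Icc 0 t, p s ≠ 0 := fun s hs =>
    abs_pos.1 (lt_of_lt_of_le (by linarith) (hp s hs))
  have hda : ∀ s, HasDerivAt a (deriv a s) s := fun s =>
    (ha.differentiable one_ne_zero s).hasDerivAt
  have hdb : ∀ s, HasDerivAt b (deriv b s) s := fun s =>
    (hb.differentiable one_ne_zero s).hasDerivAt
  have hdp : ∀ s, HasDerivAt p (-(2 * deriv a s)) s := fun s =>
    (((hda s).const_add ξ).const_mul 2).neg
  have hφ : ∀ s, HasDerivAt φ (p s) s := fun s =>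
    ((hasDerivAt_wkbPhase ha.continuous ξ s).const_mul 2).neg
  have ha₀ := ha.continuous
  have ha' := ha.continuous_deriv le_rfl
  have hb' := hb.continuous_deriv le_rfl
  rw [integral_congr fun s hs => wkbCoupling_eq_div_smul a b ξ s (hp0 s (uIcc_of_le ht ▸ hs))]
  calc _ ≤ (2 * (M / |ξ|) + (M + 2 * M ^ 2) / |ξ| * (t - 0)) * 1 := by
        refine norm_integral_smul_deriv_le ht (fun s hs => (hdb s).div (hdp s) (hp0 s hs))
          (fun s _ => ((hasDerivAt_rot_comp (hφ s)).const_mul pauli2).mul_const pauli1)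
          ?_ (Continuous.continuousOn (by fun_prop)) (fun s hs => ?_) (fun s hs => ?_)
          (fun s _ => ?_)
        · exact ContinuousOn.div (Continuous.continuousOn (by fun_prop))
            (Continuous.continuousOn (by fun_prop)) fun s hs => pow_ne_zero 2 (hp0 s hs)
        · rw [abs_div]
          exact div_le_div₀ ((abs_nonneg _).trans (hM s hs).2.1) (hM s hs).2.1 (by linarith)
            (hp s hs)
        · refine abs_quotient_deriv_le (hM s hs).2.1 (hM s hs).2.2.2 ?_ (hp s hs) hξ1
          rw [abs_neg, abs_mul, abs_two]
          linarith [(hM s hs).2.2.1]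
        · exact (CStarRing.norm_of_mem_unitary
            (mul_mem (mul_mem pauli2_mem_unitary (rot_mem_unitary _)) pauli1_mem_unitary)).le
    _ = (2 * M + (M + 2 * M ^ 2) * t) / |ξ| := by ring

theorem exists_norm_integral_wkbCoupling_le {a b : ℝ → ℝ} (ha : ContDiff ℝ 1 a)
    (hb : ContDiff ℝ 1 b) {T : ℝ} (hT : 0 ≤ T) :
    ∃ K > 0, ∃ ξ₀ > 0, ∀ ξ : ℝ, ξ₀ ≤ |ξ| → ∀ t ∈ Icc 0 T,
      ‖∫ s in 0..t, wkbCoupling a b ξ s‖ ≤ K / |ξ| := by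
  obtain ⟨M, hM1, hM⟩ := exists_bound_Icc_of_contDiff ha hb T
  refine ⟨2 * M + (M + 2 * M ^ 2) * T, by positivity, 2 * M, by positivity, fun ξ hξ t ht => ?_⟩
  calc _ ≤ (2 * M + (M + 2 * M ^ 2) * t) / |ξ| :=
        norm_integral_wkbCoupling_le ha hb ht.1 (fun s hs => hM s (Icc_subset_Icc_right ht.2 hs))
          hξ (by linarith)
    _ ≤ (2 * M + (M + 2 * M ^ 2) * T) / |ξ| := by gcongr; exact ht.2

theorem Dwkb_eq_smul_sub_smul (A : ℝ → ℝ × ℝ) (ξ t : ℝ) :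
    Dwkb A ξ t = ((ξ + (A t).1 : ℝ) : ℂ) • pauli1 - ((A t).2 : ℂ) • pauli2 := by
  rw [Dwkb, ofReal_add, add_smul]

theorem IsFundamentalSolution.hasDerivAt {D U : ℝ → Matrix (Fin 2) (Fin 2) ℂ}
    (hU : IsFundamentalSolution D U) (t : ℝ) : HasDerivAt U ((-I) • (D t * U t)) t :=
  Matrix.hasDerivAt_of_hasDerivAt_apply (hU.2 t)

theorem exists_norm_rot_wkbPhase_mul_sub_one_le {A : ℝ → ℝ × ℝ} (hA : ContDiff ℝ 1 A) {T : ℝ}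
    (hT : 0 ≤ T) :
    ∃ C > 0, ∃ ξ₀ > 0, ∀ ξ : ℝ, ξ₀ ≤ |ξ| → ∀ U : ℝ → Matrix (Fin 2) (Fin 2) ℂ,
      IsFundamentalSolution (Dwkb A ξ) U →
        ‖rot (wkbPhase (fun t => (A t).1) ξ T) * U T - 1‖ ≤ C / |ξ| := by
  have ha : ContDiff ℝ 1 fun t => (A t).1 := contDiff_fst.comp hA
  have hb : ContDiff ℝ 1 fun t => (A t).2 := contDiff_snd.comp hA
  obtain ⟨K, hK, ξ₀, hξ₀, hosc⟩ := exists_norm_integral_wkbCoupling_le ha hb hT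
  obtain ⟨M, hM⟩ :=
    isCompact_Icc.exists_bound_of_continuousOn (s := Icc 0 T) hb.continuous.continuousOn
  refine ⟨K * Real.exp (M * T), by positivity, ξ₀, hξ₀, fun ξ hξ U hU => ?_⟩
  have hW : ∀ t, HasDerivAt (fun s => rot (wkbPhase (fun t => (A t).1) ξ s) * U s)
      (wkbCoupling (fun t => (A t).1) (fun t => (A t).2) ξ t *
        (rot (wkbPhase (fun t => (A t).1) ξ t) * U t)) t := fun t =>
    hasDerivAt_rot_mul (hasDerivAt_wkbPhase ha.continuous ξ t) (by
      simpa only [Dwkb_eq_smul_sub_smul] using hU.hasDerivAt t)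
  calc _ ≤ K / |ξ| * Real.exp (M * T) :=
        norm_sub_one_le_of_hasDerivAt_mul hT (continuous_wkbCoupling ha.continuous hb.continuous ξ)
          hW (by simp [wkbPhase, hU.1, rot_zero])
          (fun t ht => (norm_wkbCoupling _ _ ξ t).trans_le (hM t ht)) (hosc ξ hξ)
    _ = K * Real.exp (M * T) / |ξ| := div_mul_eq_mul_div _ _ _

theorem wkb_monodromy_asymptotics_general
    (Tper : ℝ) (hTper : 0 < Tper)
    (A : ℝ → ℝ × ℝ) (hA : ContDiff ℝ 1 A)
    (hmean₁ : ∫ T in (0 : ℝ)..Tper, (A T).1 = 0) :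
    ∃ C > (0 : ℝ), ∃ ξ₀ > (0 : ℝ), ∀ ξ : ℝ, ξ₀ ≤ |ξ| →
      ∀ U : ℝ → Matrix (Fin 2) (Fin 2) ℂ,
        IsFundamentalSolution (Dwkb A ξ) U →
        ∀ w : EuclideanSpace ℂ (Fin 2),
          ‖(WithLp.equiv 2 (Fin 2 → ℂ)).symm
              ((U Tper - NormedSpace.exp ((-(Complex.I * ξ * Tper)) • pauli1)).mulVec
                ((WithLp.equiv 2 (Fin 2 → ℂ)) w))‖ ≤ (C / |ξ|) * ‖w‖ := by
  obtain ⟨C, hC, ξ₀, hξ₀, hW⟩ := exists_norm_rot_wkbPhase_mul_sub_one_le hA hTper.le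
  refine ⟨C, hC, ξ₀, hξ₀, fun ξ hξ U hU w => ?_⟩
  have hphase : wkbPhase (fun t => (A t).1) ξ Tper = ξ * Tper := by
    rw [wkbPhase, hmean₁, add_zero]
  have hfree : NormedSpace.exp ((-(I * ξ * Tper)) • pauli1) = rot (-(ξ * Tper)) := by
    rw [rot, ← smul_assoc]
    congr 2
    rw [real_smul]
    push_cast
    ring
  have hfactor : U Tper - NormedSpace.exp ((-(I * ξ * Tper)) • pauli1) =
      rot (-(ξ * Tper)) * (rot (ξ * Tper) * U Tper - 1) := by
    rw [hfree, mul_sub, ← mul_assoc, ← rot_add, neg_add_cancel, rot_zero, one_mul, mul_one]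
  calc _ ≤ ‖U Tper - NormedSpace.exp ((-(I * ξ * Tper)) • pauli1)‖ * ‖w‖ :=
        Matrix.l2_opNorm_mulVec _ w
    _ ≤ C / |ξ| * ‖w‖ := by
      gcongr
      rw [hfactor, CStarRing.norm_mem_unitary_mul _ (rot_mem_unitary _), ← hphase]
      exact hW ξ hξ U hU

/-- **WKB asymptotics of the monodromy matrix at large momentum** (Section 9): for a `C¹`,
`T_per`-periodic, mean-zero forcing `A`, there are `C, ξ₀ > 0` such that for `|ξ| ≥ ξ₀`
the monodromy matrix of `i U′ = [ξσ₁ + A₁(T)σ₁ − A₂(T)σ₂] U` satisfies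
`‖U_ξ(T_per) − exp(−iξT_per σ₁)‖ ≤ C/|ξ|` in the operator norm on `ℂ²` (expressed via the
action on vectors with the Euclidean norm). -/
theorem wkb_monodromy_asymptotics
    (Tper : ℝ) (hTper : 0 < Tper)
    (A : ℝ → ℝ × ℝ) (hA : ContDiff ℝ 1 A)
    (hperiodic : ∀ T : ℝ, A (T + Tper) = A T)
    (hmean₁ : ∫ T in (0 : ℝ)..Tper, (A T).1 = 0)
    (hmean₂ : ∫ T in (0 : ℝ)..Tper, (A T).2 = 0) :
    ∃ C > (0 : ℝ), ∃ ξ₀ > (0 : ℝ), ∀ ξ : ℝ, ξ₀ ≤ |ξ| →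
      ∀ U : ℝ → Matrix (Fin 2) (Fin 2) ℂ,
        IsFundamentalSolution (Dwkb A ξ) U →
        ∀ w : EuclideanSpace ℂ (Fin 2),
          ‖(WithLp.equiv 2 (Fin 2 → ℂ)).symm
              ((U Tper - NormedSpace.exp ((-(Complex.I * ξ * Tper)) • pauli1)).mulVec
                ((WithLp.equiv 2 (Fin 2 → ℂ)) w))‖ ≤ (C / |ξ|) * ‖w‖ :=
  wkb_monodromy_asymptotics_general Tper hTper A hA hmean₁
end
end
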